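/- arXiv:1307.5733 — 2 statements merged into one kernel-verified Lean document; each statement's English description precedes it below -/
import Mathlib

section
/- A normalized POVM F on B(X) is uniformly continuous (at every Borel set) if and only if for every decreasing sequence of Borel sets Δ_i with empty intersection, ‖F(Δ_i)‖ → 0. -/
open MeasureTheory Filter Topology

local notation "⟪" x ", " y "⟫" => @inner ℂ _ _ x y

variable {X : Type*} [TopologicalSpace X] [MeasurableSpace X] [BorelSpace X]
variable {H : Type*} [NormedAddCommGroup H] [InnerProductSpace ℂ H] [CompleteSpace H]

/-- A normalized POVM: self-adjoint positive values, countably additive in the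
weak operator topology, and `F univ = 1`. -/
def IsPOVM (F : Set X → H →L[ℂ] H) : Prop :=
  (∀ Δ, MeasurableSet Δ → IsSelfAdjoint (F Δ)) ∧
  (∀ Δ, MeasurableSet Δ → ∀ x : H, 0 ≤ (⟪x, F Δ x⟫).re) ∧
  (∀ Δ : ℕ → Set X, (∀ i, MeasurableSet (Δ i)) → Pairwise (Function.onFun Disjoint Δ) →
    ∀ x : H, Tendsto (fun n => ∑ i ∈ Finset.range n, ⟪x, F (Δ i) x⟫)
      atTop (𝓝 ⟪x, F (⋃ i, Δ i) x⟫)) ∧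
  F Set.univ = 1

/-- `F` is uniformly continuous at `Δ`: for every countable disjoint decomposition of `Δ`,
the partial sums converge to `F Δ` in the operator norm topology. -/
def UnifContAt (F : Set X → H →L[ℂ] H) (Δ : Set X) : Prop :=
  ∀ Δi : ℕ → Set X, (∀ i, MeasurableSet (Δi i)) → Pairwise (Function.onFun Disjoint Δi) →
    (⋃ i, Δi i) = Δ →
    Tendsto (fun n => ∑ i ∈ Finset.range n, F (Δi i)) atTop (𝓝 (F Δ))

/-- Operators over ℂ are determined by their quadratic forms. -/
lemma clm_ext_inner {S T : H →L[ℂ] H} (h : ∀ x : H, ⟪x, S x⟫ = ⟪x, T x⟫) : S = T := by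
  have h' : ∀ x : H, ⟪(S : H →ₗ[ℂ] H) x, x⟫ = ⟪(T : H →ₗ[ℂ] H) x, x⟫ := by
    intro x
    have := congrArg (starRingEnd ℂ) (h x)
    simpa [inner_conj_symm] using this
  have := (ext_inner_map (S : H →ₗ[ℂ] H) (T : H →ₗ[ℂ] H)).mp h'
  exact ContinuousLinearMap.coe_injective this

lemma povm_empty (F : Set X → H →L[ℂ] H) (hF : IsPOVM F) : F ∅ = 0 := by
  apply clm_ext_inner
  intro x
  simp only [ContinuousLinearMap.zero_apply, inner_zero_right]
  have h := hF.2.2.1 (fun _ => (∅ : Set X)) (fun _ => MeasurableSet.empty)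
      (fun i j _ => disjoint_bot_left) x
  simp only [Set.iUnion_empty, Finset.sum_const, Finset.card_range] at h
  -- h : Tendsto (fun n => n • c) atTop (𝓝 c) with c := ⟪x, F ∅ x⟫
  set c : ℂ := ⟪x, F ∅ x⟫ with hc
  have h1 : Tendsto (fun n : ℕ => (n + 1) • c) atTop (𝓝 c) :=
    h.comp (tendsto_add_atTop_nat 1)
  have h2 : Tendsto (fun n : ℕ => (n + 1) • c - n • c) atTop (𝓝 (c - c)) := h1.sub h
  have h3 : (fun n : ℕ => (n + 1) • c - n • c) = fun _ => c := by
    funext n; simp only [succ_nsmul]; ring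
  rw [h3, sub_self] at h2
  exact tendsto_nhds_unique tendsto_const_nhds h2

lemma povm_add (F : Set X → H →L[ℂ] H) (hF : IsPOVM F) {A B : Set X}
    (hA : MeasurableSet A) (hB : MeasurableSet B) (hAB : Disjoint A B) :
    F (A ∪ B) = F A + F B := by
  have hempty := povm_empty F hF
  set D : ℕ → Set X := fun n => if n = 0 then A else if n = 1 then B else ∅ with hD
  have hDm : ∀ i, MeasurableSet (D i) := by
    intro i
    rcases i with _ | _ | i <;> simp [hD, hA, hB]
  have hD0 : D 0 = A := by simp [hD]
  have hD1 : D 1 = B := by simp [hD]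
  have hD2 : ∀ i, D (i + 2) = ∅ := by intro i; simp [hD]
  have hDd : Pairwise (Function.onFun Disjoint D) := by
    intro i j hij
    rcases i with _ | _ | i <;> rcases j with _ | _ | j <;>
      simp_all [Function.onFun, hD0, hD1, hD2, Set.disjoint_empty, Set.empty_disjoint] <;>
      first
        | exact hAB
        | exact hAB.symm
  have hDu : (⋃ i, D i) = A ∪ B := by
    ext x
    simp only [Set.mem_iUnion, Set.mem_union]
    constructor
    · rintro ⟨i, hi⟩
      rcases i with _ | _ | i <;> simp_all [hD0, hD1, hD2]
    · rintro (hx | hx)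
      · exact ⟨0, by rw [hD0]; exact hx⟩
      · exact ⟨1, by rw [hD1]; exact hx⟩
  apply clm_ext_inner
  intro x
  have h := hF.2.2.1 D hDm hDd x
  rw [hDu] at h
  have hev : (fun n => ∑ i ∈ Finset.range n, ⟪x, F (D i) x⟫) =ᶠ[atTop]
      (fun _ => ⟪x, F A x⟫ + ⟪x, F B x⟫) := by
    filter_upwards [eventually_ge_atTop 2] with n hn
    have : ∑ i ∈ Finset.range n, ⟪x, F (D i) x⟫ = ∑ i ∈ Finset.range 2, ⟪x, F (D i) x⟫ := by
      refine (Finset.sum_subset (Finset.range_subset_range.mpr hn) ?_).symm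
      intro i _ hi
      simp only [Finset.mem_range, not_lt] at hi
      rcases i with _ | _ | i
      · omega
      · omega
      · rw [show i + 1 + 1 = i + 2 by omega, hD2, hempty]
        simp
    rw [this]
    simp [Finset.sum_range_succ, hD0, hD1]
  have h' := (tendsto_congr' hev).mp h
  have := tendsto_nhds_unique h' tendsto_const_nhds
  rw [this]
  simp [inner_add_right]

lemma povm_finite_union (F : Set X → H →L[ℂ] H) (hF : IsPOVM F) (Δi : ℕ → Set X)
    (hm : ∀ i, MeasurableSet (Δi i)) (hd : Pairwise (Function.onFun Disjoint Δi)) (n : ℕ) :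
    F (⋃ i ∈ Finset.range n, Δi i) = ∑ i ∈ Finset.range n, F (Δi i) := by
  induction n with
  | zero => simpa using povm_empty F hF
  | succ n ih =>
    have hu : (⋃ i ∈ Finset.range (n + 1), Δi i) = (⋃ i ∈ Finset.range n, Δi i) ∪ Δi n := by
      ext x
      simp only [Set.mem_iUnion, Finset.mem_range, Set.mem_union]
      constructor
      · rintro ⟨i, hi, hx⟩
        rcases lt_or_eq_of_le (Nat.lt_succ_iff.mp hi) with h | h
        · exact Or.inl ⟨i, h, hx⟩
        · exact Or.inr (h ▸ hx)
      · rintro (⟨i, hi, hx⟩ | hx)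
        · exact ⟨i, Nat.lt_succ_of_lt hi, hx⟩
        · exact ⟨n, Nat.lt_succ_self n, hx⟩
    have hdisj : Disjoint (⋃ i ∈ Finset.range n, Δi i) (Δi n) := by
      refine Set.disjoint_left.mpr ?_
      rintro x hx hxn
      simp only [Set.mem_iUnion, Finset.mem_range] at hx
      obtain ⟨i, hi, hxi⟩ := hx
      exact Set.disjoint_left.mp (hd (Nat.ne_of_lt hi)) hxi hxn
    rw [hu, povm_add F hF (Finset.measurableSet_biUnion _ (fun i _ => hm i)) (hm n) hdisj,
      ih, Finset.sum_range_succ]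

/-- `F` is uniformly continuous iff `‖F Δᵢ‖ → 0` for every decreasing
sequence of Borel sets with empty intersection. -/
theorem unifCont_iff_norm_tendsto_zero_of_antitone (F : Set X → H →L[ℂ] H)
    (hF : IsPOVM F) :
    (∀ Δ : Set X, MeasurableSet Δ → UnifContAt F Δ) ↔
      ∀ Δi : ℕ → Set X, (∀ i, MeasurableSet (Δi i)) → Antitone Δi →
        (⋂ i, Δi i) = ∅ →
        Tendsto (fun i => ‖F (Δi i)‖) atTop (𝓝 0) := by
  constructor
  · intro huc Δi hm hanti hinter
    set E : ℕ → Set X := fun i => Δi i \ Δi (i + 1) with hE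
    have hEm : ∀ i, MeasurableSet (E i) := fun i => (hm i).diff (hm (i + 1))
    have hEsub : ∀ i, E i ⊆ Δi i := fun i => Set.diff_subset
    have hEd : Pairwise (Function.onFun Disjoint E) := by
      have key : ∀ i j, i < j → Disjoint (E i) (E j) := by
        intro i j hij
        refine Set.disjoint_left.mpr fun x hxi hxj => ?_
        exact hxi.2 (hanti (Nat.succ_le_of_lt hij) (hEsub j hxj))
      intro i j hij
      rcases lt_or_gt_of_ne hij with h | h
      · exact key i j h
      · exact (key j i h).symm
    have hEu : (⋃ i, E i) = Δi 0 := by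
      apply Set.Subset.antisymm
      · exact Set.iUnion_subset fun i => (hEsub i).trans (hanti (Nat.zero_le i))
      · intro x hx
        have hex : ∃ n, x ∉ Δi n := by
          by_contra hc
          push_neg at hc
          have : x ∈ ⋂ i, Δi i := Set.mem_iInter.mpr hc
          rw [hinter] at this
          exact this
        classical
        set n := Nat.find hex with hn
        have hnot : x ∉ Δi n := Nat.find_spec hex
        have hnpos : n ≠ 0 := fun h => hnot (h ▸ hx)
        have hmem : x ∈ Δi (n - 1) := by
          by_contra hc
          have hle := Nat.find_le (h := hex) hc
          rw [← hn] at hle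
          omega
        refine Set.mem_iUnion.mpr ⟨n - 1, hmem, ?_⟩
        have : n - 1 + 1 = n := by omega
        rw [this]; exact hnot
    have htend := huc (Δi 0) (hm 0) E hEm hEd hEu
    -- F (Δi n) = F (Δi 0) - ∑_{i<n} F (E i)
    have hkey : ∀ n, F (Δi 0) = (∑ i ∈ Finset.range n, F (E i)) + F (Δi n) := by
      intro n
      induction n with
      | zero => simp
      | succ n ih =>
        have hsplit : Δi n = E n ∪ Δi (n + 1) := by
          rw [hE]
          exact (Set.diff_union_of_subset (hanti (Nat.le_succ n))).symm
        have : F (Δi n) = F (E n) + F (Δi (n + 1)) := by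
          rw [hsplit]
          exact povm_add F hF (hEm n) (hm (n + 1)) Set.disjoint_sdiff_left
        rw [ih, this, Finset.sum_range_succ]
        exact (add_assoc _ _ _).symm
    have h2 : Tendsto (fun n => F (Δi n)) atTop (𝓝 0) := by
      have : (fun n => F (Δi n)) = fun n => F (Δi 0) - ∑ i ∈ Finset.range n, F (E i) := by
        funext n
        rw [hkey n]; abel
      rw [this]
      have hc : Tendsto (fun _ : ℕ => F (Δi 0)) atTop (𝓝 (F (Δi 0))) := tendsto_const_nhds
      simpa using hc.sub htend
    exact tendsto_zero_iff_norm_tendsto_zero.mp h2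
  · intro hnorm Δ hΔ Δi hm hd hu
    set R : ℕ → Set X := fun n => ⋃ i, Δi (i + n) with hR
    have hRm : ∀ n, MeasurableSet (R n) := fun n => MeasurableSet.iUnion fun i => hm (i + n)
    have hRanti : Antitone R := by
      intro m n hmn x hx
      obtain ⟨i, hi⟩ := Set.mem_iUnion.mp hx
      refine Set.mem_iUnion.mpr ⟨i + (n - m), ?_⟩
      have : i + (n - m) + m = i + n := by omega
      rw [this]; exact hi
    have hRinter : (⋂ n, R n) = ∅ := by
      rw [Set.eq_empty_iff_forall_notMem]
      intro x hx
      have h0 : x ∈ R 0 := Set.mem_iInter.mp hx 0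
      obtain ⟨i, hi⟩ := Set.mem_iUnion.mp h0
      have h1 : x ∈ R (i + 0 + 1) := Set.mem_iInter.mp hx _
      obtain ⟨j, hj⟩ := Set.mem_iUnion.mp h1
      have hne : i + 0 ≠ j + (i + 0 + 1) := by omega
      exact Set.disjoint_left.mp (hd hne) hi hj
    have hDsub : ∀ i, Δi i ⊆ Δ := by
      intro i
      rw [← hu]
      exact Set.subset_iUnion _ i
    have hdecomp : ∀ n, F Δ = (∑ i ∈ Finset.range n, F (Δi i)) + F (R n) := by
      intro n
      have hsplit : Δ = (⋃ i ∈ Finset.range n, Δi i) ∪ R n := by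
        apply Set.Subset.antisymm
        · intro x hx
          rw [← hu] at hx
          obtain ⟨k, hk⟩ := Set.mem_iUnion.mp hx
          rcases lt_or_ge k n with h | h
          · exact Or.inl (Set.mem_biUnion (Finset.mem_range.mpr h) hk)
          · refine Or.inr (Set.mem_iUnion.mpr ⟨k - n, ?_⟩)
            have : k - n + n = k := by omega
            rw [this]; exact hk
        · refine Set.union_subset ?_ ?_
          · exact Set.iUnion₂_subset fun i _ => hDsub i
          · exact Set.iUnion_subset fun i => hDsub (i + n)
      have hdisj : Disjoint (⋃ i ∈ Finset.range n, Δi i) (R n) := by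
        refine Set.disjoint_left.mpr fun x hx hxR => ?_
        simp only [Set.mem_iUnion, Finset.mem_range] at hx
        obtain ⟨i, hi, hxi⟩ := hx
        obtain ⟨j, hj⟩ := Set.mem_iUnion.mp hxR
        have hne : i ≠ j + n := by omega
        exact Set.disjoint_left.mp (hd hne) hxi hj
      rw [hsplit,
        povm_add F hF (Finset.measurableSet_biUnion _ (fun i _ => hm i)) (hRm n) hdisj,
        povm_finite_union F hF Δi hm hd n]
    have hRten : Tendsto (fun n => F (R n)) atTop (𝓝 0) :=
      tendsto_zero_iff_norm_tendsto_zero.mpr (hnorm R hRm hRanti hRinter)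
    have : (fun n => ∑ i ∈ Finset.range n, F (Δi i)) = fun n => F Δ - F (R n) := by
      funext n
      rw [hdecomp n]; abel
    rw [this]
    have hc : Tendsto (fun _ : ℕ => F Δ) atTop (𝓝 (F Δ)) := tendsto_const_nhds
    simpa using hc.sub hRten
end

section
/- The covariant phase POVM E₁ on [0, 2π) defined by E₁(Δ) = (|Δ|/2π)·1 + (1/2π)⟨ψ_s|ψ_t⟩ (∫_Δ e^{i(s−t)x} dx) |s⟩⟨t| + (1/2π)⟨ψ_t|ψ_s⟩ (∫_Δ e^{i(t−s)x} dx) |t⟩⟨s| satisfies ‖E₁(Δ)‖ ≤ (3/2π)|Δ| for every Borel set Δ, so E₁ is absolutely continuous with respect to Lebesgue measure and uniformly continuous, and does not have the norm-1 property. -/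
open MeasureTheory Filter Topology Real

local notation "⟪" x ", " y "⟫" => @inner ℂ _ _ x y

/-- The rank-one operator `|u⟩⟨v| : x ↦ ⟨v, x⟩ u`. -/
noncomputable def ketBra {H : Type*} [NormedAddCommGroup H] [InnerProductSpace ℂ H]
    (u v : H) : H →L[ℂ] H :=
  ContinuousLinearMap.smulRight (innerSL ℂ v) u

/-!
`E₁` has the continuous operator-valued density
`ρ(x) = (2π)⁻¹ (1 + ⟨ψ_s|ψ_t⟩ e^{i(s-t)x} |s⟩⟨t| + ⟨ψ_t|ψ_s⟩ e^{i(t-s)x} |t⟩⟨s|)`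
with respect to Lebesgue measure, and `‖ρ(x)‖ ≤ 3/2π` since each of the three summands has norm
at most one. Hence `‖E₁(Δ)‖ ≤ (3/2π)|Δ|`, and countable additivity in norm is that of the Bochner
integral. On the other hand `⟨s|E₁([0,1))|s⟩ = 1/2π`, so `E₁([0,1)) ≠ 0` while its norm is at
most `3/2π < 1`.
-/

lemma norm_exp_I_mul_natCast_sub_mul (m n : ℕ) (x : ℝ) :
    ‖Complex.exp (Complex.I * ((m : ℂ) - n) * x)‖ = 1 := by
  rw [mul_assoc]
  exact_mod_cast Complex.norm_exp_I_mul_ofReal (((m : ℝ) - n) * x)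

lemma integrableOn_exp_I_mul_natCast_sub_mul (m n : ℕ) {Δ : Set ℝ} (hΔ : volume Δ ≠ ⊤) :
    IntegrableOn (fun x : ℝ => Complex.exp (Complex.I * ((m : ℂ) - n) * x)) Δ :=
  Measure.integrableOn_of_bounded hΔ (Continuous.aestronglyMeasurable (by fun_prop))
    (ae_of_all _ fun x => (norm_exp_I_mul_natCast_sub_mul m n x).le)

section PhaseDensity

variable {H : Type*} [NormedAddCommGroup H] [InnerProductSpace ℂ H]

lemma ketBra_eq_rankOne (u v : H) : ketBra u v = InnerProductSpace.rankOne ℂ u v := rfl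

lemma norm_ketBra (u v : H) : ‖ketBra u v‖ = ‖u‖ * ‖v‖ :=
  InnerProductSpace.norm_rankOne u v

lemma smul_one_add_smul_ketBra_add_smul_ketBra_ne_zero {u v : H} (hu : ‖u‖ = 1)
    (huv : ⟪u, v⟫ = 0) {α : ℂ} (hα : α ≠ 0) (β γ : ℂ) :
    α • (1 : H →L[ℂ] H) + β • ketBra u v + γ • ketBra v u ≠ 0 := by
  intro h
  have hdiag := congrArg (fun T : H →L[ℂ] H => ⟪u, T u⟫) h
  exact hα (by
    simpa [ketBra_eq_rankOne, inner_eq_zero_symm.mp huv, huv, inner_self_eq_norm_sq_to_K, hu]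
      using hdiag)

noncomputable def phaseDensity (u v : H) (m n : ℕ) (c d : ℂ) (x : ℝ) : H →L[ℂ] H :=
  (2 * π : ℂ)⁻¹ • (1 + (c * Complex.exp (Complex.I * ((m : ℂ) - n) * x)) • ketBra u v
    + (d * Complex.exp (Complex.I * ((n : ℂ) - m) * x)) • ketBra v u)

lemma continuous_phaseDensity (u v : H) (m n : ℕ) (c d : ℂ) :
    Continuous (phaseDensity u v m n c d) := by
  unfold phaseDensity
  fun_prop

lemma norm_phaseDensity_le {u v : H} (hu : ‖u‖ ≤ 1) (hv : ‖v‖ ≤ 1) (m n : ℕ) {c d : ℂ}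
    (hc : ‖c‖ ≤ 1) (hd : ‖d‖ ≤ 1) (x : ℝ) :
    ‖phaseDensity u v m n c d x‖ ≤ 3 / (2 * π) := by
  have hterm {a b : H} {k l : ℕ} {z : ℂ} (ha : ‖a‖ ≤ 1) (hb : ‖b‖ ≤ 1) (hz : ‖z‖ ≤ 1) :
      ‖(z * Complex.exp (Complex.I * ((k : ℂ) - l) * x)) • ketBra a b‖ ≤ 1 := by
    rw [norm_smul, norm_mul, norm_exp_I_mul_natCast_sub_mul, mul_one, norm_ketBra]
    exact mul_le_one₀ hz (by positivity) (mul_le_one₀ ha (norm_nonneg _) hb)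
  have h2π : ‖(2 * π : ℂ)⁻¹‖ = (2 * π)⁻¹ := by
    rw [norm_inv]
    norm_cast
    rw [Real.norm_of_nonneg (by positivity)]
  calc ‖phaseDensity u v m n c d x‖
      ≤ (2 * π)⁻¹ * (‖(1 : H →L[ℂ] H)‖ + 1 + 1) := by
        rw [phaseDensity, norm_smul, h2π]
        gcongr
        exact norm_add₃_le.trans (add_le_add_three le_rfl (hterm hu hv hc) (hterm hv hu hd))
    _ ≤ (2 * π)⁻¹ * (1 + 1 + 1) := by gcongr; exact ContinuousLinearMap.norm_id_le
    _ = 3 / (2 * π) := by ring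

lemma setIntegral_phaseDensity [CompleteSpace H] (u v : H) (m n : ℕ) (c d : ℂ) {Δ : Set ℝ}
    (hΔ : volume Δ ≠ ⊤) :
    ∫ x in Δ, phaseDensity u v m n c d x =
      (((volume Δ).toReal / (2 * π) : ℝ) : ℂ) • (1 : H →L[ℂ] H)
        + ((2 * π : ℂ)⁻¹ * c *
            ∫ x in Δ, Complex.exp (Complex.I * ((m : ℂ) - (n : ℂ)) * x)) • ketBra u v
        + ((2 * π : ℂ)⁻¹ * d *
            ∫ x in Δ, Complex.exp (Complex.I * ((n : ℂ) - (m : ℂ)) * x)) • ketBra v u := by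
  have h1 : IntegrableOn (fun _ => (1 : H →L[ℂ] H)) Δ := integrableOn_const hΔ
  have hmn := (integrableOn_exp_I_mul_natCast_sub_mul m n hΔ).const_mul c
  have hnm := (integrableOn_exp_I_mul_natCast_sub_mul n m hΔ).const_mul d
  simp only [phaseDensity]
  rw [integral_smul, integral_add _ (hnm.smul_const _), integral_add h1 (hmn.smul_const _),
    setIntegral_const, integral_smul_const, integral_smul_const, integral_const_mul,
    integral_const_mul]
  · rw [measureReal_def]
    module
  · exact h1.add (hmn.smul_const _)

end PhaseDensity

theorem phase_povm_absCont_unifCont_not_norm_one_general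
    {H : Type*} [NormedAddCommGroup H] [InnerProductSpace ℂ H] [CompleteSpace H]
    (e : ℕ → H) (he : Orthonormal ℂ e)
    (s t : ℕ) (hst : s ≠ t)
    (ψ : ℕ → H) (hψs : ‖ψ s‖ = 1) (hψt : ‖ψ t‖ = 1)
    (E₁ : Set ℝ → H →L[ℂ] H)
    (hE₁ : ∀ Δ : Set ℝ, MeasurableSet Δ → Δ ⊆ Set.Ico 0 (2 * π) →
      E₁ Δ = (((volume Δ).toReal / (2 * π) : ℝ) : ℂ) • (1 : H →L[ℂ] H)
        + ((2 * π : ℂ)⁻¹ * ⟪ψ s, ψ t⟫ *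
            ∫ x in Δ, Complex.exp (Complex.I * ((s : ℂ) - (t : ℂ)) * x)) • ketBra (e s) (e t)
        + ((2 * π : ℂ)⁻¹ * ⟪ψ t, ψ s⟫ *
            ∫ x in Δ, Complex.exp (Complex.I * ((t : ℂ) - (s : ℂ)) * x)) • ketBra (e t) (e s)) :
    (∀ Δ : Set ℝ, MeasurableSet Δ → Δ ⊆ Set.Ico 0 (2 * π) →
      ‖E₁ Δ‖ ≤ 3 / (2 * π) * (volume Δ).toReal) ∧
    (∀ Δ : Set ℝ, MeasurableSet Δ → Δ ⊆ Set.Ico 0 (2 * π) →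
      ∀ Δi : ℕ → Set ℝ, (∀ i, MeasurableSet (Δi i)) →
        Pairwise (Function.onFun Disjoint Δi) → (⋃ i, Δi i) = Δ →
        Tendsto (fun n => ∑ i ∈ Finset.range n, E₁ (Δi i)) atTop (𝓝 (E₁ Δ))) ∧
    ¬ (∀ Δ : Set ℝ, MeasurableSet Δ → Δ ⊆ Set.Ico 0 (2 * π) →
        E₁ Δ ≠ 0 → ‖E₁ Δ‖ = 1) := by
  set ρ := phaseDensity (e s) (e t) s t ⟪ψ s, ψ t⟫ ⟪ψ t, ψ s⟫
  have hfin {Δ : Set ℝ} (hΔ : Δ ⊆ Set.Ico 0 (2 * π)) : volume Δ < ⊤ :=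
    (measure_mono hΔ).trans_lt measure_Ico_lt_top
  have hE₁ρ {Δ : Set ℝ} (hm : MeasurableSet Δ) (hΔ : Δ ⊆ Set.Ico 0 (2 * π)) :
      E₁ Δ = ∫ x in Δ, ρ x := by
    rw [hE₁ Δ hm hΔ, setIntegral_phaseDensity _ _ _ _ _ _ (hfin hΔ).ne]
  have hρ (x : ℝ) : ‖ρ x‖ ≤ 3 / (2 * π) := by
    have hinner {a b : ℕ} (ha : ‖ψ a‖ = 1) (hb : ‖ψ b‖ = 1) : ‖⟪ψ a, ψ b⟫‖ ≤ 1 :=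
      (norm_inner_le_norm _ _).trans_eq (by rw [ha, hb, one_mul])
    exact norm_phaseDensity_le (he.1 s).le (he.1 t).le s t (hinner hψs hψt) (hinner hψt hψs) x
  have hbound {Δ : Set ℝ} (hm : MeasurableSet Δ) (hΔ : Δ ⊆ Set.Ico 0 (2 * π)) :
      ‖E₁ Δ‖ ≤ 3 / (2 * π) * (volume Δ).toReal := by
    rw [hE₁ρ hm hΔ]
    exact norm_setIntegral_le_of_norm_le_const (hfin hΔ) fun x _ => hρ x
  refine ⟨fun Δ => hbound, ?_, ?_⟩
  · rintro Δ hm hΔ Δi hmi hdisj rfl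
    have hΔi (i : ℕ) : Δi i ⊆ Set.Ico 0 (2 * π) := (Set.subset_iUnion Δi i).trans hΔ
    simp only [hE₁ρ hm hΔ, hE₁ρ (hmi _) (hΔi _)]
    exact (hasSum_integral_iUnion hmi hdisj (Measure.integrableOn_of_bounded (hfin hΔ).ne
      (continuous_phaseDensity _ _ _ _ _ _).aestronglyMeasurable (ae_of_all _ hρ))).tendsto_sum_nat
  · intro hnorm
    have hsub : Set.Ico (0 : ℝ) 1 ⊆ Set.Ico 0 (2 * π) :=
      Set.Ico_subset_Ico le_rfl (by linarith [Real.pi_gt_three])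
    have hvol : (volume (Set.Ico (0 : ℝ) 1)).toReal = 1 := by simp
    have hne : E₁ (Set.Ico 0 1) ≠ 0 := by
      rw [hE₁ _ measurableSet_Ico hsub]
      exact smul_one_add_smul_ketBra_add_smul_ketBra_ne_zero (he.1 s) (he.2 hst)
        (by simp [Real.pi_ne_zero]) _ _
    have hle := hbound measurableSet_Ico hsub
    rw [hnorm _ measurableSet_Ico hsub hne, hvol, mul_one, le_div_iff₀ (by positivity)] at hle
    linarith [Real.pi_gt_three]

/-- the covariant phase POVM
`E₁(Δ) = (|Δ|/2π)·1 + (1/2π)⟨ψ_s|ψ_t⟩(∫_Δ e^{i(s−t)x} dx)|s⟩⟨t| + h.c.`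
satisfies `‖E₁(Δ)‖ ≤ (3/2π)|Δ|`, hence it is absolutely continuous with respect to
Lebesgue measure, uniformly continuous, and it does not have the norm-1 property. -/
theorem phase_povm_absCont_unifCont_not_norm_one
    {H : Type*} [NormedAddCommGroup H] [InnerProductSpace ℂ H] [CompleteSpace H]
    (e : ℕ → H) (he : Orthonormal ℂ e)
    (s t : ℕ) (hst : s ≠ t)
    (ψ : ℕ → H) (hψs : ‖ψ s‖ = 1) (hψt : ‖ψ t‖ = 1)
    (hover : ‖⟪ψ s, ψ t⟫‖ < 1)
    (E₁ : Set ℝ → H →L[ℂ] H)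
    (hE₁ : ∀ Δ : Set ℝ, MeasurableSet Δ → Δ ⊆ Set.Ico 0 (2 * π) →
      E₁ Δ = (((volume Δ).toReal / (2 * π) : ℝ) : ℂ) • (1 : H →L[ℂ] H)
        + ((2 * π : ℂ)⁻¹ * ⟪ψ s, ψ t⟫ *
            ∫ x in Δ, Complex.exp (Complex.I * ((s : ℂ) - (t : ℂ)) * x)) • ketBra (e s) (e t)
        + ((2 * π : ℂ)⁻¹ * ⟪ψ t, ψ s⟫ *
            ∫ x in Δ, Complex.exp (Complex.I * ((t : ℂ) - (s : ℂ)) * x)) • ketBra (e t) (e s)) :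
    (∀ Δ : Set ℝ, MeasurableSet Δ → Δ ⊆ Set.Ico 0 (2 * π) →
      ‖E₁ Δ‖ ≤ 3 / (2 * π) * (volume Δ).toReal) ∧
    (∀ Δ : Set ℝ, MeasurableSet Δ → Δ ⊆ Set.Ico 0 (2 * π) →
      ∀ Δi : ℕ → Set ℝ, (∀ i, MeasurableSet (Δi i)) →
        Pairwise (Function.onFun Disjoint Δi) → (⋃ i, Δi i) = Δ →
        Tendsto (fun n => ∑ i ∈ Finset.range n, E₁ (Δi i)) atTop (𝓝 (E₁ Δ))) ∧
    ¬ (∀ Δ : Set ℝ, MeasurableSet Δ → Δ ⊆ Set.Ico 0 (2 * π) →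
        E₁ Δ ≠ 0 → ‖E₁ Δ‖ = 1) :=
  phase_povm_absCont_unifCont_not_norm_one_general e he s t hst ψ hψs hψt E₁ hE₁
end
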